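/- Fact update: if P = ⟨P_i⟩_{i<n} is a dynamic logic program in which every component P_i is a consistent set of facts, then P has exactly one extended WS-model (equivalently, exactly one extended RD-model), namely J = { l ∈ ℒ | there exists i < n with (l.) ∈ P_i such that for all j with i < j < n, neither (not l.) nor (¬l.) belongs to P_j }. -/
import Mathlib


namespace RuleUpdates

/-- Objective literal: an atom (a natural number) or its strong negation. -/
inductive OLit where
  | pos : ℕ → OLit
  | neg : ℕ → OLit
deriving DecidableEq

/-- Strong negation on objective literals (with ¬¬p identified with p). -/
def OLit.compl : OLit → OLit
  | .pos p => .neg p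
  | .neg p => .pos p

/-- Literal: an objective literal or its default negation (not not l = l). -/
inductive Lit where
  | obj : OLit → Lit
  | ndef : OLit → Lit
deriving DecidableEq

/-- Extended rule: a head literal and a finite set of body literals. -/
structure Rule where
  head : Lit
  body : Finset Lit

/-- Interpretation: a consistent set of objective literals. -/
def Interp (J : Set OLit) : Prop :=
  ∀ p : ℕ, ¬ (OLit.pos p ∈ J ∧ OLit.neg p ∈ J)

/-- Satisfaction of a literal. -/
def satLit (J : Set OLit) : Lit → Prop
  | .obj l => l ∈ J
  | .ndef l => l ∉ J

/-- Satisfaction of a set of body literals. -/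
def satBody (J : Set OLit) (B : Finset Lit) : Prop :=
  ∀ L ∈ B, satLit J L

/-- Satisfaction of a rule. -/
def satRule (J : Set OLit) (π : Rule) : Prop :=
  satBody J π.body → satLit J π.head

/-- J is a model of a program. -/
def isModel (J : Set OLit) (P : Set Rule) : Prop :=
  ∀ π ∈ P, satRule J π

/-- J* = J ∪ { not l | l ∈ ℒ ∖ J }, as a set of literals. -/
def star (J : Set OLit) : Set Lit :=
  {L | ∃ l : OLit, (L = Lit.obj l ∧ l ∈ J) ∨ (L = Lit.ndef l ∧ l ∉ J)}

/-- def(J) = { (not l.) | l ∈ ℒ ∖ J }. -/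
def defFacts (J : Set OLit) : Set Rule :=
  {π | ∃ l : OLit, l ∉ J ∧ π = ⟨Lit.ndef l, ∅⟩}

/-- S (a set of literals) is closed under program P, all literals
treated as distinct propositional atoms. -/
def closedUnder (P : Set Rule) (S : Set Lit) : Prop :=
  ∀ π ∈ P, (π.body : Set Lit) ⊆ S → π.head ∈ S

/-- least(P): the least model of P when all literals are treated as
distinct propositional atoms. -/
def leastModel (P : Set Rule) : Set Lit :=
  ⋂₀ {S | closedUnder P S}

/-- Stable model of an extended program: J* = least(P ∪ def(J)). -/
def isStableModel (P : Set Rule) (J : Set OLit) : Prop :=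
  Interp J ∧ star J = leastModel (P ∪ defFacts J)

/-- Level of a literal, with ℓ(not l) = ℓ(l). -/
def litLevel (ℓ : OLit → ℕ) : Lit → ℕ
  | .obj l => ℓ l
  | .ndef l => ℓ l

/-- ℓ↑(S): the maximal level of a literal in the finite set S. -/
def supLevel (ℓ : OLit → ℕ) (S : Finset Lit) : ℕ :=
  S.sup (litLevel ℓ)

/-- ℓ↓(S): the minimal level of a literal in the finite set S. -/
noncomputable def infLevel (ℓ : OLit → ℕ) (S : Finset Lit) : ℕ :=
  sInf (litLevel ℓ '' (S : Set Lit))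

/-- Well-supported model of an extended program w.r.t. a level mapping ℓ. -/
def isWSModelWith (P : Set Rule) (J : Set OLit) (ℓ : OLit → ℕ) : Prop :=
  isModel J P ∧
    ∀ l ∈ J, ∃ π ∈ P, π.head = Lit.obj l ∧ satBody J π.body ∧
      supLevel ℓ π.body < ℓ l

/-- Well-supported model of an extended program. -/
def isWSModel (P : Set Rule) (J : Set OLit) : Prop :=
  Interp J ∧ ∃ ℓ : OLit → ℕ, isWSModelWith P J ℓ

/-- con(L): the literals in conflict with L. -/
def con : Lit → Finset Lit
  | .obj l => {Lit.ndef l, Lit.obj l.compl}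
  | .ndef l => {Lit.obj l}

/-- ρ(P): all rules occurring in the components of the DLP. -/
def allRules {n : ℕ} (P : Fin n → Set Rule) : Set Rule :=
  {π | ∃ i : Fin n, π ∈ P i}

/-- The rule π ∈ P i is rejected w.r.t. the set of literals S:
some later σ with conflicting head has its body included in S. -/
def rejIn {n : ℕ} (P : Fin n → Set Rule) (S : Set Lit) (i : Fin n) (π : Rule) : Prop :=
  ∃ j : Fin n, i < j ∧ ∃ σ ∈ P j, σ.head ∈ con π.head ∧ (σ.body : Set Lit) ⊆ S

/-- rem(P, S) = ρ(P) ∖ rej(P, S), as a set of component-indexed rules. -/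
def remSet {n : ℕ} (P : Fin n → Set Rule) (S : Set Lit) : Set (Fin n × Rule) :=
  {x | x.2 ∈ P x.1 ∧ ¬ rejIn P S x.1 x.2}

/-- The operator T_{P,J}. -/
def TOp {n : ℕ} (P : Fin n → Set Rule) (J : Set OLit) (S : Set Lit) : Set Lit :=
  {L | ((∃ x ∈ remSet P (star J), x.2.head = L ∧ (x.2.body : Set Lit) ⊆ S) ∨
        (∃ l : OLit, l ∉ J ∧ L = Lit.ndef l)) ∧
       ¬ ∃ σ ∈ remSet P S, σ.2.head ∈ con L ∧ (σ.2.body : Set Lit) ⊆ star J}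

/-- Iterates of T_{P,J} starting from ∅. -/
def TIter {n : ℕ} (P : Fin n → Set Rule) (J : Set OLit) : ℕ → Set Lit
  | 0 => ∅
  | k + 1 => TOp P J (TIter P J k)

/-- Extended RD-model of a DLP: J* = ⋃_{k≥0} T_{P,J}^k(∅). -/
def isExtRD {n : ℕ} (P : Fin n → Set Rule) (J : Set OLit) : Prop :=
  Interp J ∧ star J = ⋃ k : ℕ, TIter P J k

/-- rej^ℓ(P, J): π ∈ P i is rejected w.r.t. J and the level mapping ℓ. -/
def rejLvl {n : ℕ} (P : Fin n → Set Rule) (J : Set OLit) (ℓ : OLit → ℕ)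
    (i : Fin n) (π : Rule) : Prop :=
  ∃ j : Fin n, i < j ∧ ∃ σ ∈ P j, σ.head ∈ con π.head ∧ satBody J σ.body ∧
    supLevel ℓ σ.body < infLevel ℓ (con π.head)

/-- Extended WS-model of a DLP. -/
def isExtWS {n : ℕ} (P : Fin n → Set Rule) (J : Set OLit) : Prop :=
  Interp J ∧ ∃ ℓ : OLit → ℕ,
    (∀ i : Fin n, ∀ π ∈ P i, ¬ rejLvl P J ℓ i π → satRule J π) ∧
    (∀ l ∈ J, ∃ x ∈ remSet P (star J), x.2.head = Lit.obj l ∧ satBody J x.2.body ∧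
      supLevel ℓ x.2.body < ℓ l)

/-- A program is acyclic w.r.t. a level mapping ℓ. -/
def acyclicWrt (Q : Set Rule) (ℓ : OLit → ℕ) : Prop :=
  (∀ l : OLit, ℓ l = ℓ l.compl) ∧ ∀ π ∈ Q, supLevel ℓ π.body < litLevel ℓ π.head

/-- The interpretation determined by a sequence of sets of facts. -/
def factModel {n : ℕ} (P : Fin n → Set Rule) : Set OLit :=
  {l | ∃ i : Fin n, (⟨Lit.obj l, ∅⟩ : Rule) ∈ P i ∧
    ∀ j : Fin n, i < j →
      (⟨Lit.ndef l, ∅⟩ : Rule) ∉ P j ∧ (⟨Lit.obj l.compl, ∅⟩ : Rule) ∉ P j}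

section FactUpdateAux

lemma OLit.compl_compl (l : OLit) : l.compl.compl = l := by cases l <;> rfl

lemma litLevel_const (c : ℕ) (L : Lit) : litLevel (fun _ => c) L = c := by
  cases L <;> rfl

lemma mem_con_obj {L : Lit} {l : OLit} :
    L ∈ con (Lit.obj l) ↔ L = Lit.ndef l ∨ L = Lit.obj l.compl := by
  simp [con]

lemma mem_con_ndef {L : Lit} {l : OLit} :
    L ∈ con (Lit.ndef l) ↔ L = Lit.obj l := by
  simp [con]

lemma con_symm {L₁ L₂ : Lit} (h : L₂ ∈ con L₁) : L₁ ∈ con L₂ := by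
  cases L₁ with
  | obj l =>
    rcases mem_con_obj.mp h with rfl | rfl
    · simp [con]
    · simp [con, OLit.compl_compl]
  | ndef l =>
    rcases mem_con_ndef.mp h with rfl
    simp [con]

lemma sat_conflict {J : Set OLit} (hJ : Interp J) {L₁ L₂ : Lit}
    (h : L₂ ∈ con L₁) (h1 : satLit J L₁) (h2 : satLit J L₂) : False := by
  cases L₁ with
  | obj l =>
    rcases mem_con_obj.mp h with rfl | rfl
    · exact h2 h1
    · cases l with
      | pos p => exact hJ p ⟨h1, h2⟩
      | neg p => exact hJ p ⟨h2, h1⟩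
  | ndef l =>
    rcases mem_con_ndef.mp h with rfl
    exact h1 h2

variable {n : ℕ} (P : Fin n → Set Rule)

/-- S-independent rejection condition. -/
def Rj (i : Fin n) (L : Lit) : Prop :=
  ∃ j : Fin n, i < j ∧ ∃ σ ∈ P j, σ.head ∈ con L

/-- A rule with head L occurs in some component and is never rejected. -/
def unrej (L : Lit) : Prop :=
  ∃ i : Fin n, ∃ π ∈ P i, π.head = L ∧ ¬ Rj P i L

variable (hfacts : ∀ i : Fin n, ∀ π ∈ P i, π.body = ∅)

include hfacts in
lemma rejIn_iff (S : Set Lit) (i : Fin n) (π : Rule) :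
    rejIn P S i π ↔ Rj P i π.head := by
  constructor
  · rintro ⟨j, hij, σ, hσ, hc, -⟩
    exact ⟨j, hij, σ, hσ, hc⟩
  · rintro ⟨j, hij, σ, hσ, hc⟩
    refine ⟨j, hij, σ, hσ, hc, ?_⟩
    rw [hfacts j σ hσ]; simp

include hfacts in
lemma mem_remSet_iff (S : Set Lit) (x : Fin n × Rule) :
    x ∈ remSet P S ↔ x.2 ∈ P x.1 ∧ ¬ Rj P x.1 x.2.head := by
  unfold remSet
  rw [Set.mem_setOf_eq, rejIn_iff P hfacts]

variable (hcons : ∀ i : Fin n, ∃ J : Set OLit, Interp J ∧ isModel J (P i))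

include hfacts hcons in
lemma unrej_conflict {L L' : Lit} (h : unrej P L) (h' : unrej P L')
    (hc : L' ∈ con L) : False := by
  obtain ⟨i, π, hπ, hh, hnR⟩ := h
  obtain ⟨j, σ, hσ, hh', hnR'⟩ := h'
  rcases lt_trichotomy i j with hij | hij | hij
  · exact hnR ⟨j, hij, σ, hσ, hh'.symm ▸ hc⟩
  · subst hij
    obtain ⟨J, hJ, hM⟩ := hcons i
    have s1 : satLit J π.head := hM π hπ (by
      intro L hL; rw [hfacts i π hπ] at hL; simp at hL)
    have s2 : satLit J σ.head := hM σ hσ (by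
      intro L hL; rw [hfacts i σ hσ] at hL; simp at hL)
    rw [hh] at s1; rw [hh'] at s2
    exact sat_conflict hJ hc s1 s2
  · exact hnR' ⟨i, hij, π, hπ, hh.symm ▸ con_symm hc⟩

include hfacts in
lemma mem_factModel_iff (l : OLit) :
    l ∈ factModel P ↔ unrej P (Lit.obj l) := by
  constructor
  · rintro ⟨i, hi, hrest⟩
    refine ⟨i, ⟨Lit.obj l, ∅⟩, hi, rfl, ?_⟩
    rintro ⟨j, hij, σ, hσ, hc⟩
    obtain ⟨hσ1, hσ2⟩ := hrest j hij
    have hb : σ.body = ∅ := hfacts j σ hσ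
    rcases mem_con_obj.mp hc with hh | hh
    · exact hσ1 (by rw [show (⟨Lit.ndef l, ∅⟩ : Rule) = σ from by
        cases σ; simp_all]; exact hσ)
    · exact hσ2 (by rw [show (⟨Lit.obj l.compl, ∅⟩ : Rule) = σ from by
        cases σ; simp_all]; exact hσ)
  · rintro ⟨i, π, hπ, hh, hnR⟩
    have hb : π.body = ∅ := hfacts i π hπ
    have hπeq : (⟨Lit.obj l, ∅⟩ : Rule) = π := by cases π; simp_all
    refine ⟨i, hπeq ▸ hπ, ?_⟩
    intro j hij
    constructor
    · intro hmem
      exact hnR ⟨j, hij, ⟨Lit.ndef l, ∅⟩, hmem, by simp [con]⟩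
    · intro hmem
      exact hnR ⟨j, hij, ⟨Lit.obj l.compl, ∅⟩, hmem, by simp [con]⟩

include hfacts hcons in
lemma interp_factModel : Interp (factModel P) := by
  rintro p ⟨h1, h2⟩
  rw [mem_factModel_iff P hfacts] at h1 h2
  exact unrej_conflict P hfacts hcons h1 h2 (by simp [con, OLit.compl])

lemma mem_star_obj {J : Set OLit} {l : OLit} : Lit.obj l ∈ star J ↔ l ∈ J := by
  simp [star]

lemma mem_star_ndef {J : Set OLit} {l : OLit} : Lit.ndef l ∈ star J ↔ l ∉ J := by
  simp [star]

include hfacts in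
lemma mem_TOp_iff (J : Set OLit) (S : Set Lit) (L : Lit) :
    L ∈ TOp P J S ↔
      (unrej P L ∨ ∃ l : OLit, l ∉ J ∧ L = Lit.ndef l) ∧
        ∀ L' ∈ con L, ¬ unrej P L' := by
  constructor
  · rintro ⟨h1, h2⟩
    constructor
    · rcases h1 with ⟨x, hx, hh, -⟩ | h
      · rw [mem_remSet_iff P hfacts] at hx
        exact Or.inl ⟨x.1, x.2, hx.1, hh, hh ▸ hx.2⟩
      · exact Or.inr h
    · rintro L' hc ⟨i, π, hπ, hh, hnR⟩
      refine h2 ⟨(i, π), (mem_remSet_iff P hfacts _ _).mpr ⟨hπ, by rw [hh]; exact hnR⟩,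
        by rw [hh]; exact hc, ?_⟩
      rw [hfacts i π hπ]; simp
  · rintro ⟨h1, h2⟩
    constructor
    · rcases h1 with ⟨i, π, hπ, hh, hnR⟩ | h
      · refine Or.inl ⟨(i, π), (mem_remSet_iff P hfacts _ _).mpr
          ⟨hπ, by rw [hh]; exact hnR⟩, hh, ?_⟩
        rw [hfacts i π hπ]; simp
      · exact Or.inr h
    · rintro ⟨σ, hσ, hc, -⟩
      rw [mem_remSet_iff P hfacts] at hσ
      exact h2 _ hc ⟨σ.1, σ.2, hσ.1, rfl, hσ.2⟩

include hfacts in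
lemma iUnion_TIter (J : Set OLit) :
    (⋃ k : ℕ, TIter P J k) = TOp P J ∅ := by
  ext L
  simp only [Set.mem_iUnion]
  constructor
  · rintro ⟨k, hk⟩
    cases k with
    | zero => exact absurd hk (by simp [TIter])
    | succ k =>
      rw [show TIter P J (k+1) = TOp P J (TIter P J k) from rfl,
        mem_TOp_iff P hfacts] at hk
      rw [mem_TOp_iff P hfacts]
      exact hk
  · intro h
    refine ⟨1, ?_⟩
    rw [show TIter P J 1 = TOp P J (TIter P J 0) from rfl, mem_TOp_iff P hfacts]
    rw [mem_TOp_iff P hfacts] at h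
    exact h

include hfacts hcons in
lemma rd_factModel : isExtRD P (factModel P) := by
  refine ⟨interp_factModel P hfacts hcons, ?_⟩
  rw [iUnion_TIter P hfacts]
  ext L
  rw [mem_TOp_iff P hfacts]
  constructor
  · rintro ⟨l, ⟨rfl, hl⟩ | ⟨rfl, hl⟩⟩
    · have hu := (mem_factModel_iff P hfacts l).mp hl
      exact ⟨Or.inl hu, fun L' hc hu' => unrej_conflict P hfacts hcons hu hu' hc⟩
    · refine ⟨Or.inr ⟨l, hl, rfl⟩, ?_⟩
      rintro L' hc hu'
      rcases mem_con_ndef.mp hc with rfl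
      exact hl ((mem_factModel_iff P hfacts l).mpr hu')
  · rintro ⟨h1, h2⟩
    cases L with
    | obj l =>
      rcases h1 with hu | ⟨l', hl', heq⟩
      · exact ⟨l, Or.inl ⟨rfl, (mem_factModel_iff P hfacts l).mpr hu⟩⟩
      · exact absurd heq (by simp)
    | ndef l =>
      refine ⟨l, Or.inr ⟨rfl, ?_⟩⟩
      intro hl
      exact h2 (Lit.obj l) (by simp [con]) ((mem_factModel_iff P hfacts l).mp hl)

include hfacts hcons in
lemma rd_unique {J : Set OLit} (h : isExtRD P J) : J = factModel P := by
  obtain ⟨hIJ, hEq⟩ := h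
  rw [iUnion_TIter P hfacts] at hEq
  ext l
  rw [mem_factModel_iff P hfacts]
  have hs : l ∈ J ↔ Lit.obj l ∈ star J := mem_star_obj.symm
  rw [hs, hEq, mem_TOp_iff P hfacts]
  constructor
  · rintro ⟨hu | ⟨l', hl', heq⟩, -⟩
    · exact hu
    · exact absurd heq (by simp)
  · intro hu
    exact ⟨Or.inl hu, fun L' hc hu' => unrej_conflict P hfacts hcons hu hu' hc⟩

lemma infLevel_con_pos (L : Lit) : 0 < infLevel (fun _ => 1) (con L) := by
  rw [Nat.pos_iff_ne_zero]
  intro h0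
  rcases Nat.sInf_eq_zero.mp h0 with h | h
  · obtain ⟨L', -, hL'⟩ := h
    rw [litLevel_const] at hL'
    exact one_ne_zero hL'
  · have hne : ∃ L', L' ∈ con L := by
      cases L with
      | obj l => exact ⟨Lit.ndef l, by simp [con]⟩
      | ndef l => exact ⟨Lit.obj l, by simp [con]⟩
    obtain ⟨L', hL'⟩ := hne
    have : litLevel (fun _ => 1) L' ∈ litLevel (fun _ => 1) '' ((con L : Finset Lit) : Set Lit) :=
      ⟨L', by simpa using hL', rfl⟩
    rw [h] at this
    exact this

include hfacts hcons in
lemma ws_factModel : isExtWS P (factModel P) := by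
  refine ⟨interp_factModel P hfacts hcons, fun _ => 1, ?_, ?_⟩
  · intro i π hπ hnr _
    have hnR : ¬ Rj P i π.head := by
      rintro ⟨j, hij, σ, hσ, hc⟩
      refine hnr ⟨j, hij, σ, hσ, hc, ?_, ?_⟩
      · intro L hL; rw [hfacts j σ hσ] at hL; simp at hL
      · rw [hfacts j σ hσ]
        simpa [supLevel] using infLevel_con_pos π.head
    have hu : unrej P π.head := ⟨i, π, hπ, rfl, hnR⟩
    cases hhead : π.head with
    | obj l =>
      rw [hhead] at hu
      exact (mem_factModel_iff P hfacts l).mpr hu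
    | ndef l =>
      rw [hhead] at hu
      intro hl
      exact unrej_conflict P hfacts hcons ((mem_factModel_iff P hfacts l).mp hl) hu
        (by simp [con])
  · intro l hl
    obtain ⟨i, π, hπ, hh, hnR⟩ := (mem_factModel_iff P hfacts l).mp hl
    refine ⟨(i, π), (mem_remSet_iff P hfacts _ _).mpr ⟨hπ, by rw [hh]; exact hnR⟩,
      hh, ?_, ?_⟩
    · intro L hL; rw [hfacts i π hπ] at hL; simp at hL
    · rw [hfacts i π hπ]
      simp [supLevel]

include hfacts in
lemma ws_unique {J : Set OLit} (h : isExtWS P J) : J = factModel P := by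
  obtain ⟨hIJ, ℓ, hmod, hsupp⟩ := h
  ext l
  rw [mem_factModel_iff P hfacts]
  constructor
  · intro hl
    obtain ⟨x, hx, hh, -, -⟩ := hsupp l hl
    rw [mem_remSet_iff P hfacts] at hx
    exact ⟨x.1, x.2, hx.1, hh, hh ▸ hx.2⟩
  · rintro ⟨i, π, hπ, hh, hnR⟩
    have hsr : satRule J π := hmod i π hπ (by
      rintro ⟨j, hij, σ, hσ, hc, -, -⟩
      exact hnR ⟨j, hij, σ, hσ, by rw [hh] at hc; exact hc⟩)
    have hsat : satLit J π.head := hsr (by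
      intro L hL; rw [hfacts i π hπ] at hL; simp at hL)
    rw [hh] at hsat
    exact hsat

end FactUpdateAux

/-- fact update: a DLP of consistent sets of facts has exactly one
extended WS-model and exactly one extended RD-model, namely factModel P. -/
theorem fact_update (n : ℕ) (P : Fin n → Set Rule)
    (hfacts : ∀ i : Fin n, ∀ π ∈ P i, π.body = ∅)
    (hcons : ∀ i : Fin n, ∃ J : Set OLit, Interp J ∧ isModel J (P i)) :
    {J : Set OLit | isExtWS P J} = {factModel P} ∧
    {J : Set OLit | isExtRD P J} = {factModel P} := by
  constructor
  · exact Set.eq_singleton_iff_unique_mem.mpr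
      ⟨ws_factModel P hfacts hcons, fun J hJ => ws_unique P hfacts hJ⟩
  · exact Set.eq_singleton_iff_unique_mem.mpr
      ⟨rd_factModel P hfacts hcons, fun J hJ => rd_unique P hfacts hcons hJ⟩

end RuleUpdates
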